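/- arXiv:1704.08730 — 3 statements merged into one kernel-verified Lean document; each statement's English description precedes it below -/
import Mathlib

section
/- Let 0 < δ ≤ 2, let c₁, c₂, c₃ ∈ ℝ, and let U ∈ C¹((1-δ,1)) satisfy (★) on (1-δ,1). Then c₂ ≥ -1, the limit lim_{x→1⁻} U(x) exists and is finite, and this limit equals either τ₁'(c₂) or τ₂'(c₂). -/
open Set Filter Real Topology

noncomputable section

/-- The Riccati-type ODE (★):
`(1-x²)U'(x) + 2x·U(x) + (1/2)U(x)² = c₁(1-x) + c₂(1+x) + c₃(1-x²)` at the point `x`. -/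
def StarEq (c₁ c₂ c₃ : ℝ) (U : ℝ → ℝ) (x : ℝ) : Prop :=
  (1 - x ^ 2) * deriv U x + 2 * x * U x + (1 / 2) * (U x) ^ 2
    = c₁ * (1 - x) + c₂ * (1 + x) + c₃ * (1 - x ^ 2)

/-- `U` is a C¹ solution of (★) on the set `s`. -/
def IsSolOn (c₁ c₂ c₃ : ℝ) (U : ℝ → ℝ) (s : Set ℝ) : Prop :=
  ContDiffOn ℝ 1 U s ∧ ∀ x ∈ s, StarEq c₁ c₂ c₃ U x

/-- `c̄₃(c₁,c₂) = -(1/2)(√(1+c₁)+√(1+c₂))(√(1+c₁)+√(1+c₂)+2)`. -/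
def cbar (c₁ c₂ : ℝ) : ℝ :=
  -(1 / 2) * (Real.sqrt (1 + c₁) + Real.sqrt (1 + c₂)) *
    (Real.sqrt (1 + c₁) + Real.sqrt (1 + c₂) + 2)

/-- `J = {c ∈ ℝ³ : c₁ ≥ -1, c₂ ≥ -1, c₃ ≥ c̄₃(c₁,c₂)}`. -/
def Jset : Set (ℝ × ℝ × ℝ) := {c | -1 ≤ c.1 ∧ -1 ≤ c.2.1 ∧ cbar c.1 c.2.1 ≤ c.2.2}

def tau1 (c₁ : ℝ) : ℝ := 2 - 2 * Real.sqrt (1 + c₁)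
def tau2 (c₁ : ℝ) : ℝ := 2 + 2 * Real.sqrt (1 + c₁)
def tau1' (c₂ : ℝ) : ℝ := -2 - 2 * Real.sqrt (1 + c₂)
def tau2' (c₂ : ℝ) : ℝ := -2 + 2 * Real.sqrt (1 + c₂)

/-!
Near `x = 1` the equation reads `U' = F(x, U) / (1 - x²)` with `F = starRhs`,
`F(1, u) = 2c₂ - 2u - u²/2` and `1 - x² ≈ 2(1 - x)`.

Since `F(x, u) ≤ -u²/4` for large `|u|`, `U` cannot cross a large level upwards, and once below a
large negative level `1/U` grows at least like `log (1/(1 - x)) / 8`, impossible while `1/U < 0`;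
so `U` is bounded near `1`. At a level `v` with `F(1, v) ≠ 0`, `U'` has a fixed sign whenever
`U = v` near `1`, so `U` crosses `v` at most once and ends up on one side of it; as `F(1, ·)` has
at most two zeros, `liminf U = limsup U`. Finally, if the limit `L` had `F(1, L) ≠ 0`, then
`(1 - x) U' → F(1, L)/2 ≠ 0` and `U` would diverge logarithmically. So `(L + 2)² = 4(1 + c₂)`.
-/

theorem tendsto_atTop_of_le_mul_sub_deriv {f f' : ℝ → ℝ} {b ρ : ℝ} (hρ : 0 < ρ)
    (hf : ∀ᶠ x in 𝓝[<] b, HasDerivAt f (f' x) x ∧ ρ ≤ (b - x) * f' x) :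
    Tendsto f (𝓝[<] b) atTop := by
  obtain ⟨a, hab : a < b, hsub⟩ := mem_nhdsLT_iff_exists_Ioo_subset.1 hf
  have hmono : MonotoneOn (fun x => f x + ρ * log (b - x)) (Ioo a b) := by
    have hderiv : ∀ x ∈ Ioo a b,
        HasDerivAt (fun x => f x + ρ * log (b - x)) (f' x + ρ * (-1 / (b - x))) x :=
      fun x hx => (hsub hx).1.add
        ((((hasDerivAt_id x).const_sub b).log (sub_pos.2 hx.2).ne').const_mul ρ)
    refine monotoneOn_of_hasDerivWithinAt_nonneg (convex_Ioo a b)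
      (fun x hx => (hderiv x hx).continuousAt.continuousWithinAt)
      (fun x hx => (hderiv x (interior_subset hx)).hasDerivWithinAt) fun x hx => ?_
    rw [interior_Ioo] at hx
    have hbx : 0 < b - x := sub_pos.2 hx.2
    have : ρ / (b - x) ≤ f' x := by rw [div_le_iff₀ hbx]; linarith [(hsub hx).2]
    linarith [show ρ * (-1 / (b - x)) = -(ρ / (b - x)) by ring]
  obtain ⟨x₀, hx₀⟩ := nonempty_Ioo.2 hab
  have hdist : Tendsto (fun x => b - x) (𝓝[<] b) (𝓝[>] 0) := by
    refine tendsto_nhdsWithin_of_tendsto_nhds_of_eventually_within _ ?_ ?_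
    · simpa using ((continuous_sub_left b).tendsto b).mono_left nhdsWithin_le_nhds
    · filter_upwards [self_mem_nhdsWithin] with x (hx : x < b) using sub_pos.2 hx
  have hlog : Tendsto (fun x => f x₀ + ρ * log (b - x₀) + -(ρ * log (b - x))) (𝓝[<] b) atTop :=
    tendsto_atTop_add_const_left _ _
      (tendsto_neg_atBot_atTop.comp ((tendsto_log_nhdsGT_zero.comp hdist).const_mul_atBot hρ))
  refine tendsto_atTop_mono' _ ?_ hlog
  filter_upwards [Ioo_mem_nhdsLT hx₀.2] with x hx
  have := hmono hx₀ ⟨hx₀.1.trans hx.1, hx.2⟩ hx.1.le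
  simp only at this
  linarith

theorem eq_zero_of_tendsto_mul_sub_deriv {f f' : ℝ → ℝ} {b L c : ℝ}
    (hf : ∀ᶠ x in 𝓝[<] b, HasDerivAt f (f' x) x) (hL : Tendsto f (𝓝[<] b) (𝓝 L))
    (hc : Tendsto (fun x => (b - x) * f' x) (𝓝[<] b) (𝓝 c)) : c = 0 := by
  have not_pos : ∀ {g g' : ℝ → ℝ} {M d : ℝ}, (∀ᶠ x in 𝓝[<] b, HasDerivAt g (g' x) x) →
      Tendsto g (𝓝[<] b) (𝓝 M) → Tendsto (fun x => (b - x) * g' x) (𝓝[<] b) (𝓝 d) →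
      ¬ 0 < d := by
    intro g g' M d hg hM hd hpos
    refine not_tendsto_atTop_of_tendsto_nhds hM
      (tendsto_atTop_of_le_mul_sub_deriv (f' := g') (half_pos hpos) ?_)
    filter_upwards [hg, hd.eventually (eventually_ge_nhds (half_lt_self hpos))] with x h1 h2
    exact ⟨h1, h2⟩
  rcases lt_trichotomy c 0 with hneg | hzero | hpos
  · refine absurd (neg_pos.2 hneg) (not_pos (hf.mono fun x hx => hx.neg) hL.neg ?_)
    simpa only [mul_neg] using hc.neg
  · exact hzero
  · exact absurd hpos (not_pos hf hL hc)

theorem le_of_hasDerivAt_neg_of_eq {f f' : ℝ → ℝ} {a b v : ℝ}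
    (hf : ∀ x ∈ Ico a b, HasDerivAt f (f' x) x) (ha : f a ≤ v)
    (hv : ∀ x ∈ Ico a b, f x = v → f' x < 0) : ∀ x ∈ Ico a b, f x ≤ v := by
  intro x hx
  have hsub : Ico a x ⊆ Ico a b := Ico_subset_Ico_right hx.2.le
  exact image_le_of_deriv_right_lt_deriv_boundary' (B := fun _ => v) (B' := fun _ => 0)
    (fun y hy => (hf y ⟨hy.1, hy.2.trans_lt hx.2⟩).continuousAt.continuousWithinAt)
    (fun y hy => (hf y (hsub hy)).hasDerivWithinAt) ha continuousOn_const
    (fun _ _ => hasDerivWithinAt_const _ _ _) (fun y hy => hv y (hsub hy)) ⟨hx.1, le_rfl⟩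

theorem eventually_le_or_ge_of_hasDerivAt_neg_of_eq {f f' : ℝ → ℝ} {b v : ℝ}
    (hf : ∀ᶠ x in 𝓝[<] b, HasDerivAt f (f' x) x ∧ (f x = v → f' x < 0)) :
    (∀ᶠ x in 𝓝[<] b, f x ≤ v) ∨ ∀ᶠ x in 𝓝[<] b, v ≤ f x := by
  obtain ⟨a, hab : a < b, hsub⟩ := mem_nhdsLT_iff_exists_Ioo_subset.1 hf
  by_cases h : ∃ x₀ ∈ Ioo a b, f x₀ ≤ v
  · obtain ⟨x₀, hx₀, hfx₀⟩ := h
    have hI : Ico x₀ b ⊆ Ioo a b := fun x hx => ⟨hx₀.1.trans_le hx.1, hx.2⟩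
    left
    filter_upwards [Ioo_mem_nhdsLT hx₀.2] with x hx
    exact le_of_hasDerivAt_neg_of_eq (fun y hy => (hsub (hI hy)).1) hfx₀
      (fun y hy => (hsub (hI hy)).2) x (Ioo_subset_Ico_self hx)
  · push Not at h
    right
    filter_upwards [Ioo_mem_nhdsLT hab] with x hx using (h x hx).le

theorem eventually_le_or_ge_of_hasDerivAt_pos_of_eq {f f' : ℝ → ℝ} {b v : ℝ}
    (hf : ∀ᶠ x in 𝓝[<] b, HasDerivAt f (f' x) x ∧ (f x = v → 0 < f' x)) :
    (∀ᶠ x in 𝓝[<] b, f x ≤ v) ∨ ∀ᶠ x in 𝓝[<] b, v ≤ f x := by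
  have := eventually_le_or_ge_of_hasDerivAt_neg_of_eq (f := -f) (f' := -f') (v := -v)
    (hf.mono fun x hx => ⟨hx.1.neg, fun h => neg_neg_of_pos (hx.2 (neg_inj.1 h))⟩)
  simp only [Pi.neg_apply, neg_le_neg_iff] at this
  exact this.symm

theorem exists_tendsto_of_eventually_le_or_ge {α : Type*} {l : Filter α} [l.NeBot]
    {f : α → ℝ} {S : Set ℝ} (hS : S.Finite)
    (hle : IsBoundedUnder (· ≤ ·) l f) (hge : IsBoundedUnder (· ≥ ·) l f)
    (h : ∀ v ∉ S, (∀ᶠ x in l, f x ≤ v) ∨ ∀ᶠ x in l, v ≤ f x) : ∃ L, Tendsto f l (𝓝 L) := by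
  refine ⟨limsup f l, tendsto_of_liminf_eq_limsup ?_ rfl hle hge⟩
  by_contra hne
  have hlt : liminf f l < limsup f l := (liminf_le_limsup hle hge).lt_of_ne hne
  obtain ⟨v, hv, hvS⟩ := ((Ioo_infinite hlt).sdiff hS).nonempty
  rcases h v hvS with hfv | hfv
  · exact (limsup_le_of_le hge.isCoboundedUnder_flip hfv).not_gt hv.2
  · exact (le_liminf_of_le hle.isCoboundedUnder_flip hfv).not_gt hv.1

def starRhs (c₁ c₂ c₃ x u : ℝ) : ℝ :=
  c₁ * (1 - x) + c₂ * (1 + x) + c₃ * (1 - x ^ 2) - 2 * x * u - 1 / 2 * u ^ 2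

theorem IsSolOn.hasDerivAt {c₁ c₂ c₃ x : ℝ} {U : ℝ → ℝ} {s : Set ℝ}
    (hU : IsSolOn c₁ c₂ c₃ U s) (hs : IsOpen s) (hx : x ∈ s) (hx1 : x ^ 2 ≠ 1) :
    HasDerivAt U (starRhs c₁ c₂ c₃ x (U x) / (1 - x ^ 2)) x := by
  refine ((hU.1.differentiableOn one_ne_zero).differentiableAt (hs.mem_nhds hx)).hasDerivAt
    |>.congr_deriv ?_
  have hstar : StarEq c₁ c₂ c₃ U x := hU.2 x hx
  rw [StarEq] at hstar
  rw [eq_comm, div_eq_iff (sub_ne_zero.2 hx1.symm), starRhs]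
  linear_combination -hstar

theorem starRhs_one (c₁ c₂ c₃ u : ℝ) : starRhs c₁ c₂ c₃ 1 u = 2 * c₂ - 2 * u - 1 / 2 * u ^ 2 := by
  unfold starRhs; ring

theorem neg_one_le_of_starRhs_one_eq_zero {c₁ c₂ c₃ L : ℝ} (h : starRhs c₁ c₂ c₃ 1 L = 0) :
    -1 ≤ c₂ := by
  rw [starRhs_one] at h
  nlinarith [sq_nonneg (L + 2)]

theorem eq_tau1'_or_eq_tau2'_of_starRhs_one_eq_zero {c₁ c₂ c₃ L : ℝ}
    (h : starRhs c₁ c₂ c₃ 1 L = 0) : L = tau1' c₂ ∨ L = tau2' c₂ := by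
  rw [starRhs_one] at h
  have hsqrt : √(1 + c₂) = |L + 2| / 2 := by
    rw [show 1 + c₂ = ((L + 2) / 2) ^ 2 by linear_combination h / 2, sqrt_sq_eq_abs, abs_div,
      abs_two]
  rcases le_or_gt 0 (L + 2) with hL | hL
  · right
    rw [tau2', hsqrt, abs_of_nonneg hL]
    ring
  · left
    rw [tau1', hsqrt, abs_of_neg hL]
    ring

theorem exists_starRhs_le_neg_sq (c₁ c₂ c₃ : ℝ) :
    ∃ K > 0, ∀ x ∈ Icc (0 : ℝ) 1, ∀ u, K ≤ |u| → starRhs c₁ c₂ c₃ x u ≤ -(u ^ 2 / 4) := by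
  refine ⟨8 + (|c₁| + 2 * |c₂| + |c₃|), by positivity, fun x hx u hu => ?_⟩
  obtain ⟨hx0, hx1⟩ := hx
  have e1 : c₁ * (1 - x) ≤ |c₁| := by nlinarith [le_abs_self c₁, abs_nonneg c₁]
  have e2 : c₂ * (1 + x) ≤ 2 * |c₂| := by nlinarith [le_abs_self c₂, abs_nonneg c₂]
  have e3 : c₃ * (1 - x ^ 2) ≤ |c₃| := by
    nlinarith [abs_nonneg c₃, mul_le_mul hx1 hx1 hx0 zero_le_one,
      mul_le_mul_of_nonneg_right (le_abs_self c₃) (by nlinarith : (0 : ℝ) ≤ 1 - x ^ 2)]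
  have e4 : -(2 * x * u) ≤ 2 * |u| := by nlinarith [neg_abs_le u, le_abs_self u]
  unfold starRhs
  nlinarith [sq_abs u, mul_le_mul_of_nonneg_left hu (abs_nonneg u), abs_nonneg c₁,
    abs_nonneg c₂, abs_nonneg c₃]

section NearOne

variable {c₁ c₂ c₃ : ℝ} {U : ℝ → ℝ}

theorem isBoundedUnder_le_of_hasDerivAt_starRhs
    (hU : ∀ᶠ x in 𝓝[<] 1, HasDerivAt U (starRhs c₁ c₂ c₃ x (U x) / (1 - x ^ 2)) x) :
    IsBoundedUnder (· ≤ ·) (𝓝[<] 1) U := by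
  obtain ⟨K, hK, hF⟩ := exists_starRhs_le_neg_sq c₁ c₂ c₃
  obtain ⟨a, ha : a < 1, hsub⟩ :=
    mem_nhdsLT_iff_exists_Ioo_subset.1 (hU.and (Ioo_mem_nhdsLT zero_lt_one))
  obtain ⟨x₀, hx₀⟩ := nonempty_Ioo.2 ha
  have hI : Ico x₀ 1 ⊆ Ioo a 1 := fun x hx => ⟨hx₀.1.trans_le hx.1, hx.2⟩
  set B := max (U x₀) K
  refine ⟨B, eventually_map.2 ?_⟩
  filter_upwards [Ioo_mem_nhdsLT hx₀.2] with x hx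
  refine le_of_hasDerivAt_neg_of_eq (fun y hy => (hsub (hI hy)).1) (le_max_left _ _)
    (fun y hy hUy => ?_) x (Ioo_subset_Ico_self hx)
  obtain ⟨-, hy0, hy1⟩ := hsub (hI hy)
  have hB : 0 < B := hK.trans_le (le_max_right _ _)
  have hFy := hF y ⟨hy0.le, hy1.le⟩ (U y) (by rw [hUy, abs_of_pos hB]; exact le_max_right _ _)
  rw [hUy] at hFy ⊢
  exact div_neg_of_neg_of_pos (hFy.trans_lt (by nlinarith)) (by nlinarith)

theorem isBoundedUnder_ge_of_hasDerivAt_starRhs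
    (hU : ∀ᶠ x in 𝓝[<] 1, HasDerivAt U (starRhs c₁ c₂ c₃ x (U x) / (1 - x ^ 2)) x) :
    IsBoundedUnder (· ≥ ·) (𝓝[<] 1) U := by
  obtain ⟨K, hK, hF⟩ := exists_starRhs_le_neg_sq c₁ c₂ c₃
  obtain ⟨a, ha : a < 1, hsub⟩ :=
    mem_nhdsLT_iff_exists_Ioo_subset.1 (hU.and (Ioo_mem_nhdsLT zero_lt_one))
  refine ⟨-K, eventually_map.2 ?_⟩
  filter_upwards [Ioo_mem_nhdsLT ha] with x₀ hx₀
  by_contra! hUx₀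
  have hI : Ico x₀ 1 ⊆ Ioo a 1 := fun x hx => ⟨hx₀.1.trans_le hx.1, hx.2⟩
  have hFle : ∀ y ∈ Ico x₀ 1, U y ≤ -K →
      starRhs c₁ c₂ c₃ y (U y) ≤ -(U y ^ 2 / 4) ∧ y ∈ Ioo 0 1 := fun y hy hUy => by
    obtain ⟨-, hy0, hy1⟩ := hsub (hI hy)
    exact ⟨hF y ⟨hy0.le, hy1.le⟩ _ (by rw [abs_of_neg (by linarith)]; linarith), hy0, hy1⟩
  have hlow : ∀ y ∈ Ico x₀ 1, U y ≤ -K := by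
    refine le_of_hasDerivAt_neg_of_eq (fun y hy => (hsub (hI hy)).1) hUx₀.le fun y hy hUy => ?_
    obtain ⟨hFy, hy0, hy1⟩ := hFle y hy hUy.le
    exact div_neg_of_neg_of_pos (hFy.trans_lt (by rw [hUy]; nlinarith)) (by nlinarith)
  -- below `-K` the equation forces `(1/U)' ≥ 1/(8(1-x))`, so `1/U` cannot stay negative
  have hinv : Tendsto (fun x => (U x)⁻¹) (𝓝[<] 1) atTop := by
    refine tendsto_atTop_of_le_mul_sub_deriv (ρ := 1 / 8)
      (f' := fun y => -(starRhs c₁ c₂ c₃ y (U y) / (1 - y ^ 2)) / U y ^ 2) (by norm_num) ?_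
    filter_upwards [Ioo_mem_nhdsLT hx₀.2] with y hy
    have hy' := Ioo_subset_Ico_self hy
    obtain ⟨hFy, hy0, hy1⟩ := hFle y hy' (hlow y hy')
    have hUy : U y < 0 := by linarith [hlow y hy']
    refine ⟨(hsub (hI hy')).1.inv hUy.ne, ?_⟩
    have h1y : 1 - y ≠ 0 := by linarith
    have h1y' : 1 + y ≠ 0 := by linarith
    rw [show (1 - y) * (-(starRhs c₁ c₂ c₃ y (U y) / (1 - y ^ 2)) / U y ^ 2)
        = -starRhs c₁ c₂ c₃ y (U y) / U y ^ 2 / (1 + y) by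
          rw [show 1 - y ^ 2 = (1 - y) * (1 + y) by ring]; field_simp,
      le_div_iff₀ (by linarith), le_div_iff₀ (by nlinarith)]
    nlinarith
  obtain ⟨x, hx, hx'⟩ := ((hinv.eventually_gt_atTop 0).and (Ioo_mem_nhdsLT hx₀.2)).exists
  linarith [inv_pos.1 hx, hlow x (Ioo_subset_Ico_self hx')]

theorem eventually_le_or_ge_of_hasDerivAt_starRhs
    (hU : ∀ᶠ x in 𝓝[<] 1, HasDerivAt U (starRhs c₁ c₂ c₃ x (U x) / (1 - x ^ 2)) x) {v : ℝ}
    (hv : starRhs c₁ c₂ c₃ 1 v ≠ 0) :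
    (∀ᶠ x in 𝓝[<] 1, U x ≤ v) ∨ ∀ᶠ x in 𝓝[<] 1, v ≤ U x := by
  have hF : Tendsto (fun x => starRhs c₁ c₂ c₃ x v) (𝓝[<] 1) (𝓝 (starRhs c₁ c₂ c₃ 1 v)) :=
    ((show Continuous fun x => starRhs c₁ c₂ c₃ x v by unfold starRhs; fun_prop).tendsto 1)
      |>.mono_left nhdsWithin_le_nhds
  have hden : ∀ᶠ x in 𝓝[<] (1 : ℝ), 0 < 1 - x ^ 2 := by
    filter_upwards [Ioo_mem_nhdsLT zero_lt_one] with x hx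
    nlinarith [hx.1, hx.2]
  rcases hv.lt_or_gt with hneg | hpos
  · refine eventually_le_or_ge_of_hasDerivAt_neg_of_eq
      (f' := fun x => starRhs c₁ c₂ c₃ x (U x) / (1 - x ^ 2)) ?_
    filter_upwards [hU, hF.eventually_lt_const hneg, hden] with x hd hFx hx
    exact ⟨hd, fun hUx => hUx ▸ div_neg_of_neg_of_pos hFx hx⟩
  · refine eventually_le_or_ge_of_hasDerivAt_pos_of_eq
      (f' := fun x => starRhs c₁ c₂ c₃ x (U x) / (1 - x ^ 2)) ?_
    filter_upwards [hU, hF.eventually_const_lt hpos, hden] with x hd hFx hx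
    exact ⟨hd, fun hUx => hUx ▸ div_pos hFx hx⟩

theorem exists_tendsto_starRhs_eq_zero_of_hasDerivAt
    (hU : ∀ᶠ x in 𝓝[<] 1, HasDerivAt U (starRhs c₁ c₂ c₃ x (U x) / (1 - x ^ 2)) x) :
    ∃ L, Tendsto U (𝓝[<] 1) (𝓝 L) ∧ starRhs c₁ c₂ c₃ 1 L = 0 := by
  have hroots : {v | starRhs c₁ c₂ c₃ 1 v = 0}.Finite :=
    (toFinite {tau1' c₂, tau2' c₂}).subset fun v hv =>
      eq_tau1'_or_eq_tau2'_of_starRhs_one_eq_zero hv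
  obtain ⟨L, hL⟩ := exists_tendsto_of_eventually_le_or_ge hroots
    (isBoundedUnder_le_of_hasDerivAt_starRhs hU) (isBoundedUnder_ge_of_hasDerivAt_starRhs hU)
    fun v hv => eventually_le_or_ge_of_hasDerivAt_starRhs hU hv
  refine ⟨L, hL, ?_⟩
  -- `(1 - x) U' = F(x, U) / (1 + x)` has a limit, which must vanish since `U` converges
  have hlim : Tendsto (fun x => starRhs c₁ c₂ c₃ x (U x) / (1 + x)) (𝓝[<] 1)
      (𝓝 (starRhs c₁ c₂ c₃ 1 L / (1 + 1))) := by
    have hx : Tendsto (fun x : ℝ => x) (𝓝[<] 1) (𝓝 1) := nhdsWithin_le_nhds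
    have hcont : Continuous fun p : ℝ × ℝ => starRhs c₁ c₂ c₃ p.1 p.2 := by
      unfold starRhs; fun_prop
    exact ((hcont.tendsto (1, L)).comp (hx.prodMk_nhds hL)).div (tendsto_const_nhds.add hx)
      (by norm_num)
  have hmul : Tendsto (fun x => (1 - x) * (starRhs c₁ c₂ c₃ x (U x) / (1 - x ^ 2))) (𝓝[<] 1)
      (𝓝 (starRhs c₁ c₂ c₃ 1 L / (1 + 1))) := by
    refine hlim.congr' ?_
    filter_upwards [self_mem_nhdsWithin] with x (hx : x < 1)
    have h1x : 1 - x ≠ 0 := by linarith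
    rw [show 1 - x ^ 2 = (1 - x) * (1 + x) by ring, ← mul_div_assoc, mul_div_mul_left _ _ h1x]
  simpa using eq_zero_of_tendsto_mul_sub_deriv hU hL hmul

end NearOne

theorem statement9_general (δ c₁ c₂ c₃ : ℝ) (hδ : 0 < δ) (U : ℝ → ℝ)
    (hU : IsSolOn c₁ c₂ c₃ U (Ioo (1 - δ) (1 : ℝ))) :
    -1 ≤ c₂ ∧ ∃ L : ℝ, Tendsto U (𝓝[<] (1 : ℝ)) (𝓝 L) ∧
      (L = tau1' c₂ ∨ L = tau2' c₂) := by
  have hderiv : ∀ᶠ x in 𝓝[<] (1 : ℝ),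
      HasDerivAt U (starRhs c₁ c₂ c₃ x (U x) / (1 - x ^ 2)) x := by
    filter_upwards [Ioo_mem_nhdsLT (max_lt (by linarith) zero_lt_one : max (1 - δ) 0 < 1)]
      with x hx
    have hx0 : 0 < x := (le_max_right _ _).trans_lt hx.1
    exact hU.hasDerivAt isOpen_Ioo ⟨(le_max_left _ _).trans_lt hx.1, hx.2⟩ (by nlinarith [hx.2])
  obtain ⟨L, hL, hroot⟩ := exists_tendsto_starRhs_eq_zero_of_hasDerivAt hderiv
  exact ⟨neg_one_le_of_starRhs_one_eq_zero hroot, L, hL,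
    eq_tau1'_or_eq_tau2'_of_starRhs_one_eq_zero hroot⟩

/-- behavior at the right endpoint `1`. -/
theorem statement9 (δ c₁ c₂ c₃ : ℝ) (hδ : 0 < δ) (hδ2 : δ ≤ 2) (U : ℝ → ℝ)
    (hU : IsSolOn c₁ c₂ c₃ U (Ioo (1 - δ) (1 : ℝ))) :
    -1 ≤ c₂ ∧ ∃ L : ℝ, Tendsto U (𝓝[<] (1 : ℝ)) (𝓝 L) ∧
      (L = tau1' c₂ ∨ L = tau2' c₂) :=
  statement9_general δ c₁ c₂ c₃ hδ U hU
end
end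

section
/- For every A > 0 there exists a constant C > 0, depending only on A, such that for every c = (c₁,c₂,c₃) ∈ ℝ³ with |c₁| + |c₂| + |c₃| ≤ A and every C¹ solution U of (★) on (-1,1), one has |U(x)| ≤ C for all x ∈ (-1,1). -/
open Set Filter Real Topology

noncomputable section

/-! Where `U ≥ 8 + 2A`, (★) gives `8 (1 + x) U' ≤ -U²`. Hence a value `U x₀ = B ≥ 8 + 2A`
propagates to the left (`U' < 0` wherever `U = B`), and on the interval where `U ≥ B` the
function `1/U - log (1 + x) / 8` is nondecreasing. Since `log (1 + x) → -∞` as `x → -1`, this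
forces `1/U ≤ 0` at `x₁ = -1 + (1 + x₀) e^{-8/B}`, which is absurd. The lower bound follows
from the symmetry `U(x) ↦ -U(-x)`, which exchanges `c₁` and `c₂`. -/

theorem le_of_deriv_neg_of_eq {f : ℝ → ℝ} {a b B : ℝ}
    (hf : ∀ x ∈ Icc a b, DifferentiableAt ℝ f x) (hb : B ≤ f b)
    (hneg : ∀ x ∈ Ioc a b, f x = B → deriv f x < 0) :
    ∀ x ∈ Icc a b, B ≤ f x := by
  have hg : ∀ t ∈ Icc (-b) (-a), HasDerivAt (fun t ↦ -f (-t)) (deriv f (-t)) t := fun t ht ↦ by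
    have := ((hf (-t) ⟨by linarith [ht.2], by linarith [ht.1]⟩).hasDerivAt.comp t
      (hasDerivAt_neg t)).fun_neg
    simpa using this
  have key := image_le_of_deriv_right_lt_deriv_boundary' (f := fun t ↦ -f (-t)) (B := fun _ ↦ -B)
    (B' := fun _ ↦ 0) (fun t ht ↦ (hg t ht).continuousAt.continuousWithinAt)
    (fun t ht ↦ (hg t (Ico_subset_Icc_self ht)).hasDerivWithinAt) (by simpa using hb)
    continuousOn_const (fun _ _ ↦ hasDerivWithinAt_const _ _ _)
    (fun t ht heq ↦ hneg (-t) ⟨by linarith [ht.2], by linarith [ht.1]⟩ (by linarith))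
  intro x hx
  simpa using key (x := -x) ⟨by linarith [hx.2], by linarith [hx.1]⟩

theorem monotoneOn_inv_sub_log_div {U : ℝ → ℝ} {a k s t : ℝ} (hk : 0 < k) (has : a < s)
    (hU : ∀ y ∈ Icc s t, DifferentiableAt ℝ U y) (hpos : ∀ y ∈ Icc s t, 0 < U y)
    (hric : ∀ y ∈ Icc s t, k * (y - a) * deriv U y ≤ -U y ^ 2) :
    MonotoneOn (fun y ↦ (U y)⁻¹ - log (y - a) / k) (Icc s t) := by
  have hH : ∀ y ∈ Icc s t, HasDerivAt (fun y ↦ (U y)⁻¹ - log (y - a) / k)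
      (-deriv U y / U y ^ 2 - 1 / (y - a) / k) y := fun y hy ↦
    ((hU y hy).hasDerivAt.inv (hpos y hy).ne').sub
      ((((hasDerivAt_id y).sub_const a).log (by simp; linarith [hy.1])).div_const k)
  refine monotoneOn_of_hasDerivWithinAt_nonneg (convex_Icc s t)
    (fun y hy ↦ (hH y hy).continuousAt.continuousWithinAt)
    (fun y hy ↦ (hH y (interior_subset hy)).hasDerivWithinAt) fun y hy ↦ ?_
  have hy := interior_subset hy
  have hya : 0 < y - a := by linarith [hy.1]
  have hUy := hpos y hy
  rw [sub_nonneg, div_div, div_le_div_iff₀ (by positivity) (by positivity)]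
  linarith [hric y hy]

theorem lt_of_mul_deriv_le_neg_sq {U : ℝ → ℝ} {a b k M : ℝ} (hk : 0 < k) (hM : 0 < M)
    (hU : DifferentiableOn ℝ U (Ioo a b))
    (hric : ∀ y ∈ Ioo a b, M ≤ U y → k * (y - a) * deriv U y ≤ -U y ^ 2) :
    ∀ x ∈ Ioo a b, U x < M := by
  intro x₀ hx₀
  by_contra! hMx₀
  set B := U x₀
  have hB : 0 < B := hM.trans_le hMx₀
  -- chosen so that the bound `(U x₁)⁻¹ ≤ B⁻¹ - log ((x₀ - a) / (x₁ - a)) / k` given by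
  -- the monotonicity below becomes `(U x₁)⁻¹ ≤ 0`
  set x₁ := a + (x₀ - a) * exp (-k / B)
  have hx₀a : 0 < x₀ - a := by linarith [hx₀.1]
  have hx₁a : x₁ - a = (x₀ - a) * exp (-k / B) := by ring
  have hx₁ : a < x₁ ∧ x₁ < x₀ := by
    have : exp (-k / B) < 1 := exp_lt_one_iff.mpr (div_neg_of_neg_of_pos (by linarith) hB)
    constructor <;> nlinarith [exp_pos (-k / B)]
  have hsub : Icc x₁ x₀ ⊆ Ioo a b := fun y hy ↦ ⟨by linarith [hy.1], by linarith [hy.2, hx₀.2]⟩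
  have hdiff : ∀ y ∈ Icc x₁ x₀, DifferentiableAt ℝ U y := fun y hy ↦
    hU.differentiableAt (isOpen_Ioo.mem_nhds (hsub hy))
  have hric' : ∀ y ∈ Icc x₁ x₀, M ≤ U y → k * (y - a) * deriv U y ≤ -U y ^ 2 :=
    fun y hy ↦ hric y (hsub hy)
  have hge : ∀ y ∈ Icc x₁ x₀, B ≤ U y := by
    refine le_of_deriv_neg_of_eq hdiff le_rfl fun y hy hUy ↦ ?_
    have hy' : y ∈ Icc x₁ x₀ := Ioc_subset_Icc_self hy
    have hric_y := hric' y hy' (hUy ▸ hMx₀)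
    have hya : 0 < k * (y - a) := mul_pos hk (by linarith [hy.1])
    by_contra! h
    nlinarith [mul_nonneg hya.le h]
  have hmono := monotoneOn_inv_sub_log_div hk hx₁.1 hdiff (fun y hy ↦ hB.trans_le (hge y hy))
    fun y hy ↦ hric' y hy (hMx₀.trans (hge y hy))
  have hH := hmono (left_mem_Icc.mpr hx₁.2.le) (right_mem_Icc.mpr hx₁.2.le) hx₁.2.le
  simp only [hx₁a, log_mul hx₀a.ne' (exp_pos _).ne', log_exp] at hH
  have hUx₁ : 0 < (U x₁)⁻¹ := inv_pos.mpr (hB.trans_le (hge x₁ (left_mem_Icc.mpr hx₁.2.le)))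
  have hlog : (log (x₀ - a) + -k / B) / k = log (x₀ - a) / k - B⁻¹ := by
    field_simp
    ring
  linarith

theorem StarEq.reflect {c₁ c₂ c₃ x : ℝ} {U : ℝ → ℝ} (h : StarEq c₁ c₂ c₃ U (-x)) :
    StarEq c₂ c₁ c₃ (fun y ↦ -U (-y)) x := by
  unfold StarEq at *
  rw [deriv.fun_neg, deriv_comp_neg]
  linear_combination h

theorem StarEq.mul_deriv_le_neg_sq {c₁ c₂ c₃ A y : ℝ} {U : ℝ → ℝ} (h : StarEq c₁ c₂ c₃ U y)
    (hy : y ∈ Ioo (-1) 1) (hc : |c₁| + |c₂| + |c₃| ≤ A) (hU : 8 + 2 * A ≤ U y) :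
    8 * (y - -1) * deriv U y ≤ -U y ^ 2 := by
  obtain ⟨hy₁, hy₂⟩ := hy
  have hA : 0 ≤ A := (by positivity : 0 ≤ |c₁| + |c₂| + |c₃|).trans hc
  have hrhs : c₁ * (1 - y) + c₂ * (1 + y) + c₃ * (1 - y ^ 2) ≤ 2 * A := by
    nlinarith [le_abs_self c₁, le_abs_self c₂, le_abs_self c₃, abs_nonneg c₁, abs_nonneg c₂,
      abs_nonneg c₃, mul_pos (by linarith : 0 < 1 - y) (by linarith : 0 < 1 + y)]
  have hkey : 4 * (1 - y ^ 2) * deriv U y ≤ -U y ^ 2 := by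
    unfold StarEq at h
    nlinarith
  have hU' : deriv U y ≤ 0 := by
    by_contra! h'
    nlinarith [mul_pos (mul_pos (by linarith : 0 < 1 - y) (by linarith : 0 < 1 + y)) h']
  nlinarith [mul_nonneg (by linarith : 0 ≤ 1 + y) (by linarith : 0 ≤ 1 + y)]

theorem starEq_solution_lt {c₁ c₂ c₃ A : ℝ} {U : ℝ → ℝ} (hc : |c₁| + |c₂| + |c₃| ≤ A)
    (hd : DifferentiableOn ℝ U (Ioo (-1) 1)) (hU : ∀ x ∈ Ioo (-1 : ℝ) 1, StarEq c₁ c₂ c₃ U x) :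
    ∀ x ∈ Ioo (-1 : ℝ) 1, U x < 8 + 2 * A := by
  have hA : 0 ≤ A := (by positivity : 0 ≤ |c₁| + |c₂| + |c₃|).trans hc
  exact lt_of_mul_deriv_le_neg_sq (by norm_num) (by positivity) hd
    fun y hy hUy ↦ (hU y hy).mul_deriv_le_neg_sq hy hc hUy

/-- uniform a priori bound on solutions in terms of a bound on `c`. -/
theorem statement10 (A : ℝ) (hA : 0 < A) :
    ∃ C : ℝ, 0 < C ∧ ∀ c₁ c₂ c₃ : ℝ, |c₁| + |c₂| + |c₃| ≤ A →
      ∀ U : ℝ → ℝ, IsSolOn c₁ c₂ c₃ U (Ioo (-1 : ℝ) 1) →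
        ∀ x ∈ Ioo (-1 : ℝ) 1, |U x| ≤ C := by
  refine ⟨8 + 2 * A, by linarith, fun c₁ c₂ c₃ hc U hU x hx ↦ ?_⟩
  have hneg : MapsTo (fun y : ℝ ↦ -y) (Ioo (-1) 1) (Ioo (-1) 1) :=
    fun y hy ↦ ⟨by linarith [hy.2], by linarith [hy.1]⟩
  have hd : DifferentiableOn ℝ U (Ioo (-1) 1) := hU.1.differentiableOn one_ne_zero
  have hupper := starEq_solution_lt hc hd hU.2 x hx
  have hd' : DifferentiableOn ℝ (fun y ↦ -U (-y)) (Ioo (-1) 1) :=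
    (hd.comp (differentiableOn_neg _) hneg).fun_neg
  have hlower := starEq_solution_lt (by linarith : |c₂| + |c₁| + |c₃| ≤ A) hd'
    (fun y hy ↦ (hU.2 (-y) (hneg hy)).reflect) (-x) (hneg hx)
  rw [neg_neg] at hlower
  exact abs_le.mpr ⟨by linarith, hupper.le⟩
end
end

section
/- Let c₁ ≥ -1, c₂ ≥ -1, and c₃ < c̄₃(c₁,c₂). Then the ODE (★) has no C¹ solution on (-1,1). -/
open Set Filter Real Topology

noncomputable section

/-!
Let `p = √(1 + c₁)`, `q = √(1 + c₂)` and `μ = (1 + x)^p (1 - x)^q ≤ 2^(p+q)`. At `c₃ = c̄₃` the affine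
function `V = (1 + p)(1 - x) - (1 + q)(1 + x)` solves (★). For a solution `U`, the weighted deviation
`Z = μ (U - V)` satisfies `(1 - x²) Z' = (c₃ - c̄₃)(1 - x²) μ - Z² / (2μ)`, hence the Riccati
inequality `(1 - x²) Z' ≤ -C Z²`. This forces `Z ≡ 0` on `(-1, 1)`: where `Z > 0`, the function
`1 / Z - C' log (1 + x)` increases, so `1 / Z` would become negative near `-1` (symmetrically where
`Z < 0`, near `1`). But `Z ≡ 0` gives `0 = Z' = (c₃ - c̄₃) μ < 0`.
-/

section RiccatiInequality

variable {Z Z' : ℝ → ℝ} {a b C x : ℝ}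

theorem nonpos_of_deriv_mul_sub_le_neg_sq (hC : 0 < C) (hax : a < x)
    (hZ : ∀ y ∈ Ioc a x, HasDerivAt Z (Z' y) y)
    (hZ' : ∀ y ∈ Ioc a x, Z' y * (y - a) ≤ -C * Z y ^ 2) : Z x ≤ 0 := by
  by_contra! hZx
  have hZ'_nonpos : ∀ y ∈ Ioc a x, Z' y ≤ 0 := fun y hy =>
    nonpos_of_mul_nonpos_left ((hZ' y hy).trans (by nlinarith)) (sub_pos.2 hy.1)
  have hZ_pos : ∀ y ∈ Ioc a x, 0 < Z y := by
    have hanti : AntitoneOn Z (Ioc a x) :=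
      antitoneOn_of_hasDerivWithinAt_nonpos (convex_Ioc a x)
        (fun y hy => (hZ y hy).continuousAt.continuousWithinAt)
        (fun y hy => (hZ y (interior_subset hy)).hasDerivWithinAt)
        (fun y hy => hZ'_nonpos y (interior_subset hy))
    exact fun y hy => hZx.trans_le (hanti hy ⟨hax, le_rfl⟩ hy.2)
  -- `1 / Z` grows at least like `C log (y - a)`, which tends to `-∞` at `a`.
  have hG : MonotoneOn (fun y => (Z y)⁻¹ - C * log (y - a)) (Ioc a x) := by
    have hG' : ∀ y ∈ Ioc a x, HasDerivAt (fun y => (Z y)⁻¹ - C * log (y - a))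
        (-Z' y / Z y ^ 2 - C * (1 / (y - a))) y := fun y hy =>
      ((hZ y hy).inv (hZ_pos y hy).ne').sub
        ((((hasDerivAt_id y).sub_const a).log (sub_pos.2 hy.1).ne').const_mul C)
    refine monotoneOn_of_hasDerivWithinAt_nonneg (convex_Ioc a x)
      (fun y hy => (hG' y hy).continuousAt.continuousWithinAt)
      (fun y hy => (hG' y (interior_subset hy)).hasDerivWithinAt) (fun y hy => ?_)
    obtain ⟨hay, -⟩ := interior_subset hy
    have := hZ' y (interior_subset hy)
    have hZy := hZ_pos y (interior_subset hy)
    rw [sub_nonneg, mul_one_div, div_le_div_iff₀ (sub_pos.2 hay) (by positivity)]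
    linarith
  have hbound : Tendsto (fun y => (Z x)⁻¹ - C * log (x - a) + C * log (y - a)) (𝓝[>] a) atBot := by
    have : Tendsto (fun y => y - a) (𝓝[>] a) (𝓝[>] 0) := by
      refine tendsto_nhdsWithin_of_tendsto_nhds_of_eventually_within _ ?_ ?_
      · simpa using ((continuous_sub_right a).tendsto a).mono_left nhdsWithin_le_nhds
      · filter_upwards [self_mem_nhdsWithin] with y hy using sub_pos.2 (mem_Ioi.1 hy)
    exact tendsto_atBot_add_const_left _ _
      ((tendsto_log_nhdsGT_zero.comp this).const_mul_atBot hC)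
  obtain ⟨y, hy, hneg⟩ :=
    (Eventually.and (Ioc_mem_nhdsGT hax) (hbound.eventually_lt_atBot 0)).exists
  have hmono : (Z y)⁻¹ - C * log (y - a) ≤ (Z x)⁻¹ - C * log (x - a) := hG hy ⟨hax, le_rfl⟩ hy.2
  linarith [inv_pos.2 (hZ_pos y hy)]

theorem nonneg_of_deriv_mul_sub_le_neg_sq (hC : 0 < C) (hxb : x < b)
    (hZ : ∀ y ∈ Ico x b, HasDerivAt Z (Z' y) y)
    (hZ' : ∀ y ∈ Ico x b, Z' y * (b - y) ≤ -C * Z y ^ 2) : 0 ≤ Z x := by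
  have hmem : ∀ y ∈ Ioc (-b) (-x), -y ∈ Ico x b := fun y hy =>
    ⟨le_neg_of_le_neg hy.2, neg_lt.1 hy.1⟩
  have := nonpos_of_deriv_mul_sub_le_neg_sq (Z := fun y => -Z (-y)) (Z' := fun y => Z' (-y))
    hC (neg_lt_neg hxb)
    (fun y hy => by
      simpa using ((hZ (-y) (hmem y hy)).comp y (hasDerivAt_neg y)).fun_neg)
    (fun y hy => by simpa [sub_neg_eq_add, add_comm] using hZ' (-y) (hmem y hy))
  simpa using this

theorem eqOn_zero_of_deriv_mul_le_neg_sq (hab : a < b) (hC : 0 < C)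
    (hZ : ∀ y ∈ Ioo a b, HasDerivAt Z (Z' y) y)
    (hZ' : ∀ y ∈ Ioo a b, Z' y * ((y - a) * (b - y)) ≤ -C * Z y ^ 2) :
    EqOn Z 0 (Ioo a b) := by
  have hC' : 0 < C / (b - a) := div_pos hC (sub_pos.2 hab)
  -- Since `Z' ≤ 0`, the factor `b - y` (resp. `y - a`) may be replaced by its maximum `b - a`.
  have hZ'_nonpos : ∀ y ∈ Ioo a b, Z' y ≤ 0 := fun y hy =>
    nonpos_of_mul_nonpos_left ((hZ' y hy).trans (by nlinarith))
      (mul_pos (sub_pos.2 hy.1) (sub_pos.2 hy.2))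
  have hC_div : ∀ y, -(C / (b - a)) * Z y ^ 2 = -C * Z y ^ 2 / (b - a) := fun y => by ring
  have hleft : ∀ y ∈ Ioo a b, Z' y * (y - a) ≤ -(C / (b - a)) * Z y ^ 2 := fun y hy => by
    have := hZ' y hy
    have := hZ'_nonpos y hy
    rw [hC_div, le_div_iff₀ (sub_pos.2 hab)]
    nlinarith [mul_nonpos_of_nonpos_of_nonneg this (sq_nonneg (y - a))]
  have hright : ∀ y ∈ Ioo a b, Z' y * (b - y) ≤ -(C / (b - a)) * Z y ^ 2 := fun y hy => by
    have := hZ' y hy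
    have := hZ'_nonpos y hy
    rw [hC_div, le_div_iff₀ (sub_pos.2 hab)]
    nlinarith [mul_nonpos_of_nonpos_of_nonneg this (sq_nonneg (b - y))]
  intro x hx
  exact le_antisymm
    (nonpos_of_deriv_mul_sub_le_neg_sq hC' hx.1 (fun y hy => hZ y ⟨hy.1, hy.2.trans_lt hx.2⟩)
      (fun y hy => hleft y ⟨hy.1, hy.2.trans_lt hx.2⟩))
    (nonneg_of_deriv_mul_sub_le_neg_sq hC' hx.2 (fun y hy => hZ y ⟨hx.1.trans_le hy.1, hy.2⟩)
      (fun y hy => hright y ⟨hx.1.trans_le hy.1, hy.2⟩))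

end RiccatiInequality

section WeightedDeviation

variable {c₁ c₂ c₃ p q x : ℝ} {U : ℝ → ℝ}

/-- For `p ^ 2 = 1 + c₁`, `q ^ 2 = 1 + c₂` this solves (★) with `c₃ = -(p + q)(p + q + 2)/2`,
which is `cbar c₁ c₂` when `p, q ≥ 0`. -/
def cbarSol (p q y : ℝ) : ℝ := (1 + p) * (1 - y) - (1 + q) * (1 + y)

def weight (p q y : ℝ) : ℝ := (1 + y) ^ p * (1 - y) ^ q

def weightedDeviation (p q : ℝ) (U : ℝ → ℝ) (y : ℝ) : ℝ := weight p q y * (U y - cbarSol p q y)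

lemma weight_pos (hx : x ∈ Ioo (-1) 1) : 0 < weight p q x :=
  mul_pos (rpow_pos_of_pos (by linarith [hx.1]) p) (rpow_pos_of_pos (by linarith [hx.2]) q)

lemma weight_le_two_rpow (hp : 0 ≤ p) (hq : 0 ≤ q) (hx : x ∈ Ioo (-1) 1) :
    weight p q x ≤ 2 ^ (p + q) := by
  obtain ⟨hx₁, hx₂⟩ := hx
  rw [weight, rpow_add two_pos]
  gcongr <;> linarith

lemma hasDerivAt_weightedDeviation (hp : p ^ 2 = 1 + c₁) (hq : q ^ 2 = 1 + c₂)
    (hx : x ∈ Ioo (-1) 1) (hU : DifferentiableAt ℝ U x) (hstar : StarEq c₁ c₂ c₃ U x) :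
    HasDerivAt (weightedDeviation p q U)
      ((c₃ + (p + q) * (p + q + 2) / 2) * weight p q x
        - weight p q x * (U x - cbarSol p q x) ^ 2 / (2 * (1 - x ^ 2))) x := by
  obtain ⟨hx₁, hx₂⟩ : 0 < 1 + x ∧ 0 < 1 - x := ⟨by linarith [hx.1], by linarith [hx.2]⟩
  have hweight : HasDerivAt (weight p q)
      (p * (1 + x) ^ (p - 1) * (1 - x) ^ q - (1 + x) ^ p * (q * (1 - x) ^ (q - 1))) x :=
    ((((hasDerivAt_id x).const_add 1).rpow_const (Or.inl hx₁.ne')).fun_mul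
      (((hasDerivAt_id x).const_sub 1).rpow_const (Or.inl hx₂.ne'))).congr_deriv (by simp; ring)
  have hsol : HasDerivAt (cbarSol p q) (-(2 + p + q)) x :=
    ((((hasDerivAt_id x).const_sub 1).const_mul (1 + p)).fun_sub
      (((hasDerivAt_id x).const_add 1).const_mul (1 + q))).congr_deriv (by ring)
  have hU' : deriv U x = (c₁ * (1 - x) + c₂ * (1 + x) + c₃ * (1 - x ^ 2)
      - 2 * x * U x - U x ^ 2 / 2) / (1 - x ^ 2) := by
    rw [eq_div_iff (by nlinarith)]
    unfold StarEq at hstar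
    linarith
  refine (hweight.fun_mul (hU.hasDerivAt.fun_sub hsol)).congr_deriv ?_
  rw [hU', rpow_sub_one hx₁.ne', rpow_sub_one hx₂.ne']
  have hc₁ : c₁ = p ^ 2 - 1 := by linarith
  have hc₂ : c₂ = q ^ 2 - 1 := by linarith
  subst hc₁ hc₂
  have hs : 1 - x ^ 2 ≠ 0 := by nlinarith
  simp only [weight, cbarSol]
  field_simp
  ring

lemma weightedDeviation_deriv_mul_le {ε : ℝ} (hp : 0 ≤ p) (hq : 0 ≤ q) (hε : ε ≤ 0)
    (hx : x ∈ Ioo (-1) 1) (w : ℝ) :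
    (ε * weight p q x - weight p q x * w ^ 2 / (2 * (1 - x ^ 2))) * ((x - -1) * (1 - x))
      ≤ -(1 / (2 * 2 ^ (p + q))) * (weight p q x * w) ^ 2 := by
  have hμ := weight_pos (p := p) (q := q) hx
  have hμM := weight_le_two_rpow hp hq hx
  have hs : 0 < 1 - x ^ 2 := by nlinarith [hx.1, hx.2]
  have hM : (0 : ℝ) < 2 ^ (p + q) := by positivity
  have hlhs : (ε * weight p q x - weight p q x * w ^ 2 / (2 * (1 - x ^ 2))) * ((x - -1) * (1 - x))
      = ε * weight p q x * (1 - x ^ 2) - weight p q x * w ^ 2 / 2 := by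
    field_simp; ring
  have hrhs : (weight p q x * w) ^ 2 / (2 * 2 ^ (p + q)) ≤ weight p q x * w ^ 2 / 2 := by
    rw [div_le_div_iff₀ (by positivity) two_pos]
    nlinarith [mul_le_mul_of_nonneg_left hμM (by positivity : 0 ≤ weight p q x * w ^ 2)]
  rw [hlhs, neg_mul, one_div_mul_eq_div]
  nlinarith [mul_nonpos_of_nonpos_of_nonneg hε (mul_pos hμ hs).le]

end WeightedDeviation

/-- no C¹ solution on (-1,1) when `c₃ < c̄₃(c₁,c₂)`. -/
theorem statement17 (c₁ c₂ c₃ : ℝ) (h1 : -1 ≤ c₁) (h2 : -1 ≤ c₂) (h3 : c₃ < cbar c₁ c₂) :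
    ¬ ∃ U : ℝ → ℝ, IsSolOn c₁ c₂ c₃ U (Ioo (-1 : ℝ) 1) := by
  rintro ⟨U, hU, hstar⟩
  set p := √(1 + c₁)
  set q := √(1 + c₂)
  have hε : c₃ + (p + q) * (p + q + 2) / 2 < 0 := by unfold cbar at h3; linarith
  have hZ : ∀ y ∈ Ioo (-1 : ℝ) 1, HasDerivAt (weightedDeviation p q U)
      ((c₃ + (p + q) * (p + q + 2) / 2) * weight p q y
        - weight p q y * (U y - cbarSol p q y) ^ 2 / (2 * (1 - y ^ 2))) y := fun y hy =>
    hasDerivAt_weightedDeviation (sq_sqrt (by linarith)) (sq_sqrt (by linarith)) hy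
      ((hU.differentiableOn one_ne_zero).differentiableAt (Ioo_mem_nhds hy.1 hy.2)) (hstar y hy)
  have hZ_zero : EqOn (weightedDeviation p q U) 0 (Ioo (-1) 1) :=
    eqOn_zero_of_deriv_mul_le_neg_sq (by norm_num) (by positivity) hZ fun y hy =>
      weightedDeviation_deriv_mul_le (sqrt_nonneg _) (sqrt_nonneg _) hε.le hy _
  have hmem : (0 : ℝ) ∈ Ioo (-1) 1 := by norm_num
  have hderiv_zero := (hZ 0 hmem).unique ((hasDerivAt_const (0 : ℝ) (0 : ℝ)).congr_of_eventuallyEq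
    (hZ_zero.eventuallyEq_of_mem (Ioo_mem_nhds hmem.1 hmem.2)))
  have hW0 : U 0 - cbarSol p q 0 = 0 := by simpa [weightedDeviation, weight] using hZ_zero hmem
  have hweight0 : weight p q 0 = 1 := by simp [weight]
  rw [hweight0, hW0] at hderiv_zero
  linarith
end
end
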